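/- arXiv:1011.0098 — 5 statements merged into one kernel-verified Lean document; each statement's English description precedes it below -/
import Mathlib

section
/- For i, j, k ∈ ℤ/4m, define turn_m(i,j,k) to hold iff i+j+k ∈ {-1,0,1} when both i and j are odd, and i+j+k = 0 otherwise. Then turn_m(i,j,k) holds if and only if there exist angles α ∈ [i]_m, β ∈ [j]_m, γ ∈ [k]_m with α+β+γ ≡ 0 (mod 2π). -/
/-!
Every angle of `[i]_m` has the form `2π(i + e)/(4m)` with an offset `e ∈ (-1, 1)` if `i` is odd
and `e = 0` if `i` is even. So `α + β + γ ≡ 0 (mod 2π)` says exactly that the integer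
`d = e_i + e_j + e_k` satisfies `i + j + k + d ≡ 0 (mod 4m)`. Then `|d|` is smaller than the
number of odd indices among `i, j, k` (or `d = 0`), while `d` has the parity of that number
because `4m` is even; hence `d = 0` unless all three are odd, in which case `d = ±1`.
-/

open Real Complex

/-- The OPRA_m sector `[i]_m` as a subset of the circle `ℝ/2πℤ` (`Real.Angle`):
an open arc if `i` is odd, a single point if `i` is even. -/
noncomputable def sector (m : ℕ) (i : ZMod (4*m)) : Set Real.Angle :=
  if Odd i.val then
    (fun r : ℝ => (r : Real.Angle)) ''
      Set.Ioo (2*π*((i.val : ℝ)-1)/(4*m)) (2*π*((i.val : ℝ)+1)/(4*m))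
  else {((2*π*(i.val : ℝ)/(4*m) : ℝ) : Real.Angle)}

/-- The direction angle `φ_XY` of the vector `Y - X`, as an element of the circle. -/
noncomputable def phiAngle (X Y : ℂ) : Real.Angle := (Complex.arg (Y - X) : Real.Angle)

/-- An o-point: a point of the plane (modeled as `ℂ`) with an orientation. -/
abbrev OPoint := ℂ × Real.Angle

/-- The distinct-position OPRA_m base relation `A ∠_i^j B`. -/
noncomputable def oprarel (m : ℕ) (i j : ZMod (4*m)) (A B : OPoint) : Prop :=
  A.1 ≠ B.1 ∧ phiAngle A.1 B.1 - A.2 ∈ sector m i ∧ phiAngle B.1 A.1 - B.2 ∈ sector m j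

/-- The same-position OPRA_m base relation `A ∠i B`. -/
noncomputable def oprasame (m : ℕ) (i : ZMod (4*m)) (A B : OPoint) : Prop :=
  A.1 = B.1 ∧ B.2 - A.2 ∈ sector m i

/-- `turn_m(i,j,k)`. -/
def turnRel (m : ℕ) (i j k : ZMod (4*m)) : Prop :=
  if Odd i.val ∧ Odd j.val then i + j + k = 0 ∨ i + j + k = 1 ∨ i + j + k = -1
  else i + j + k = 0

/-- `sign_m(i)`. -/
def signm (m : ℕ) (i : ZMod (4*m)) : ℤ :=
  if i.val = 0 ∨ i.val = 2*m then 0 else if i.val < 2*m then 1 else -1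

/-- `triangle_m(i,j,k)`. -/
def triRel (m : ℕ) (i j k : ZMod (4*m)) : Prop :=
  turnRel m i j (k - ((2*m : ℕ) : ZMod (4*m))) ∧
  ¬(i = ((2*m : ℕ) : ZMod (4*m)) ∧ j = ((2*m : ℕ) : ZMod (4*m)) ∧ k = ((2*m : ℕ) : ZMod (4*m))) ∧
  signm m i = signm m j ∧ signm m j = signm m k

/-- The sign of an angle, where both `0` and `π` get sign `0`. -/
noncomputable def angsign (θ : Real.Angle) : ℤ := by
  classical exact if θ.toReal = 0 ∨ θ.toReal = π then 0 else if 0 < θ.toReal then 1 else -1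

def IsSectorOffset (n : ℕ) (e : ℝ) : Prop :=
  if Odd n then |e| < 1 else e = 0

namespace IsSectorOffset

lemma zero (n : ℕ) : IsSectorOffset n 0 := by
  unfold IsSectorOffset; split_ifs <;> simp

lemma abs_le {n : ℕ} {e : ℝ} (h : IsSectorOffset n e) : |e| ≤ (n % 2 : ℕ) := by
  unfold IsSectorOffset at h
  split_ifs at h with hn
  · rw [Nat.odd_iff.1 hn]; exact_mod_cast h.le
  · simp [h]

lemma eq_zero_of_le_abs {n : ℕ} {e : ℝ} (h : IsSectorOffset n e) (hle : ((n % 2 : ℕ) : ℝ) ≤ |e|) :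
    e = 0 := by
  unfold IsSectorOffset at h
  split_ifs at h with hn
  · rw [Nat.odd_iff.1 hn] at hle; push_cast at hle; linarith
  · exact h

lemma sum_eq_zero_or_abs_lt {a b c : ℕ} {ea eb ec : ℝ} {d : ℤ} (ha : IsSectorOffset a ea)
    (hb : IsSectorOffset b eb) (hc : IsSectorOffset c ec) (hsum : ea + eb + ec = d) :
    d = 0 ∨ |d| < (a % 2 + b % 2 + c % 2 : ℕ) := by
  by_contra! h
  obtain ⟨hd0, hW⟩ := h
  have hle : ((a % 2 + b % 2 + c % 2 : ℕ) : ℝ) ≤ |ea| + |eb| + |ec| := calc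
    ((a % 2 + b % 2 + c % 2 : ℕ) : ℝ) ≤ ((|d| : ℤ) : ℝ) := by
      rw [← Int.cast_natCast]; exact Int.cast_le.2 hW
    _ = |ea + eb + ec| := by rw [hsum, Int.cast_abs]
    _ ≤ |ea| + |eb| + |ec| := abs_add_three ea eb ec
  have ha' := ha.abs_le; have hb' := hb.abs_le; have hc' := hc.abs_le
  push_cast at hle ha' hb' hc'
  have ha0 := ha.eq_zero_of_le_abs (by linarith)
  have hb0 := hb.eq_zero_of_le_abs (by linarith)
  have hc0 := hc.eq_zero_of_le_abs (by linarith)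
  exact hd0 (by exact_mod_cast show (d : ℝ) = 0 by rw [← hsum, ha0, hb0, hc0]; ring)

end IsSectorOffset

lemma exists_isSectorOffset_sum_iff {a b c : ℕ} {d : ℤ} (hpar : Even ((a + b + c : ℕ) + d)) :
    (∃ ea eb ec, IsSectorOffset a ea ∧ IsSectorOffset b eb ∧ IsSectorOffset c ec ∧
      ea + eb + ec = d) ↔ d = 0 ∨ (Odd a ∧ Odd b ∧ (d = 1 ∨ d = -1)) := by
  constructor
  · rintro ⟨ea, eb, ec, ha, hb, hc, hsum⟩
    have hd := IsSectorOffset.sum_eq_zero_or_abs_lt ha hb hc hsum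
    rw [abs_lt] at hd
    rw [Int.even_iff] at hpar
    rw [Nat.odd_iff, Nat.odd_iff]
    push_cast at hd hpar
    omega
  · rintro (rfl | ⟨ha, hb, hd⟩)
    · exact ⟨0, 0, 0, .zero a, .zero b, .zero c, by simp⟩
    · refine ⟨d / 2, d / 2, 0, ?_, ?_, .zero c, by ring⟩ <;>
        rcases hd with rfl | rfl <;> simp [IsSectorOffset, ha, hb, abs_div] <;> norm_num

lemma ZMod.add_add_add_intCast_eq_zero_iff {n : ℕ} [NeZero n] (i j k : ZMod n) (d : ℤ) :
    i + j + k + d = 0 ↔ (n : ℤ) ∣ i.val + j.val + k.val + d := by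
  rw [← ZMod.intCast_zmod_eq_zero_iff_dvd]
  push_cast
  simp only [ZMod.natCast_zmod_val]

lemma turnRel_iff (m : ℕ) (i j k : ZMod (4 * m)) :
    turnRel m i j k ↔
      ∃ d : ℤ, i + j + k + d = 0 ∧ (d = 0 ∨ (Odd i.val ∧ Odd j.val ∧ (d = 1 ∨ d = -1))) := by
  unfold turnRel
  constructor
  · intro h
    split_ifs at h with hij
    · rcases h with h | h | h
      · exact ⟨0, by simpa using h, Or.inl rfl⟩
      · exact ⟨-1, by simp [h], Or.inr ⟨hij.1, hij.2, Or.inr rfl⟩⟩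
      · exact ⟨1, by simp [h], Or.inr ⟨hij.1, hij.2, Or.inl rfl⟩⟩
    · exact ⟨0, by simpa using h, Or.inl rfl⟩
  · rintro ⟨d, hsum, rfl | ⟨hi, hj, rfl | rfl⟩⟩
    · simp only [Int.cast_zero, add_zero] at hsum
      split_ifs <;> simp [hsum]
    · rw [if_pos ⟨hi, hj⟩]
      right; right; linear_combination hsum
    · rw [if_pos ⟨hi, hj⟩]
      right; left; linear_combination hsum

lemma mem_sector_iff {m : ℕ} [NeZero m] (i : ZMod (4 * m)) (θ : Real.Angle) :
    θ ∈ sector m i ↔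
      ∃ e, IsSectorOffset i.val e ∧ θ = (((i.val + e) * (π / (2 * m)) : ℝ) : Real.Angle) := by
  have hm : (0 : ℝ) < m := by exact_mod_cast Nat.pos_of_neZero m
  have hu : 0 < π / (2 * m) := by positivity
  have scale (s : ℝ) : 2 * π * s / (4 * m) = s * (π / (2 * m)) := by field_simp; ring
  unfold sector IsSectorOffset
  split_ifs with hodd
  · simp only [scale, Set.mem_image, Set.mem_Ioo]
    constructor
    · rintro ⟨x, ⟨hlo, hhi⟩, rfl⟩
      refine ⟨x / (π / (2 * m)) - i.val, abs_lt.2 ⟨?_, ?_⟩, ?_⟩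
      · rw [lt_sub_iff_add_lt, lt_div_iff₀ hu]; linarith
      · rw [sub_lt_iff_lt_add, div_lt_iff₀ hu]; linarith
      · congr 1; field_simp; ring
    · rintro ⟨e, he, rfl⟩
      obtain ⟨hlo, hhi⟩ := abs_lt.1 he
      exact ⟨_, ⟨by gcongr; linarith, by gcongr⟩, rfl⟩
  · simp only [Set.mem_singleton_iff, scale]
    constructor
    · rintro rfl; exact ⟨0, rfl, by rw [add_zero]⟩
    · rintro ⟨e, rfl, rfl⟩; rw [add_zero]

lemma Real.Angle.coe_mul_pi_div_eq_zero_iff {m : ℕ} [NeZero m] (x : ℝ) :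
    ((x * (π / (2 * m)) : ℝ) : Real.Angle) = 0 ↔ ∃ t : ℤ, x = 4 * m * t := by
  have hm : (m : ℝ) ≠ 0 := Nat.cast_ne_zero.2 (NeZero.ne m)
  rw [Real.Angle.coe_eq_zero_iff]
  refine exists_congr fun t => ?_
  rw [zsmul_eq_mul]
  constructor <;> intro h
  · field_simp at h; linarith
  · rw [h]; field_simp; ring

lemma exists_sector_sum_eq_zero_iff {m : ℕ} [NeZero m] (i j k : ZMod (4 * m)) :
    (∃ α ∈ sector m i, ∃ β ∈ sector m j, ∃ γ ∈ sector m k, α + β + γ = 0) ↔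
      ∃ d : ℤ, i + j + k + d = 0 ∧ ∃ ea eb ec, IsSectorOffset i.val ea ∧
        IsSectorOffset j.val eb ∧ IsSectorOffset k.val ec ∧ ea + eb + ec = d := by
  simp only [mem_sector_iff, ZMod.add_add_add_intCast_eq_zero_iff]
  constructor
  · rintro ⟨_, ⟨ea, ha, rfl⟩, _, ⟨eb, hb, rfl⟩, _, ⟨ec, hc, rfl⟩, hsum⟩
    rw [← Real.Angle.coe_add, ← Real.Angle.coe_add, ← add_mul, ← add_mul,
      Real.Angle.coe_mul_pi_div_eq_zero_iff] at hsum
    obtain ⟨t, ht⟩ := hsum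
    refine ⟨4 * m * t - (i.val + j.val + k.val), ⟨t, by push_cast; ring⟩,
      ea, eb, ec, ha, hb, hc, ?_⟩
    push_cast; linarith
  · rintro ⟨d, ⟨t, ht⟩, ea, eb, ec, ha, hb, hc, hsum⟩
    refine ⟨_, ⟨ea, ha, rfl⟩, _, ⟨eb, hb, rfl⟩, _, ⟨ec, hc, rfl⟩, ?_⟩
    rw [← Real.Angle.coe_add, ← Real.Angle.coe_add, ← add_mul, ← add_mul,
      Real.Angle.coe_mul_pi_div_eq_zero_iff]
    refine ⟨t, ?_⟩
    have ht' := congrArg (Int.cast : ℤ → ℝ) ht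
    push_cast at ht'
    linarith

/-- characterization of `turn_m`. -/
theorem stmt3 (m : ℕ) (hm : 1 ≤ m) (i j k : ZMod (4*m)) :
    turnRel m i j k ↔
      ∃ α ∈ sector m i, ∃ β ∈ sector m j, ∃ γ ∈ sector m k, α + β + γ = 0 := by
  have : NeZero m := ⟨by omega⟩
  rw [turnRel_iff, exists_sector_sum_eq_zero_iff]
  refine exists_congr fun d => and_congr_right fun hd => ?_
  have hpar : Even (((i.val + j.val + k.val : ℕ) : ℤ) + d) := by
    obtain ⟨t, ht⟩ := (ZMod.add_add_add_intCast_eq_zero_iff i j k d).1 hd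
    exact ⟨m * t + m * t, by push_cast at ht ⊢; linarith⟩
  exact (exists_isSectorOffset_sum_iff hpar).symm
end

section
/- If turn_m(i,j,k) holds then for every α ∈ [i]_m there exist β ∈ [j]_m and γ ∈ [k]_m with α+β+γ ≡ 0 (mod 2π); and symmetrically, any one of the three angles may be chosen arbitrarily in its sector and the other two completed to a full turn. -/
open Real Complex

/-!
Write an angle of `[i]_m` as the centre `2πi/(4m)` plus an offset `δ`, which ranges over
`(-2π/(4m), 2π/(4m))` if `i` is odd and is `0` if `i` is even. Centres add like the indices, and
`turn_m(i,j,k)` says `i + j + k = e` with `e ∈ {-1, 0, 1}`, where `e ≠ 0` forces all three indices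
to be odd; this reformulation is symmetric in `i, j, k`, so only the first claim needs proof. Given
`δ`, the offsets of `j` and `k` must add up to `-δ - e·2π/(4m)`: share this between `j` and `k`
when both are odd, give it to the odd one when only one is (then `e = 0`), and when both are even,
parity forces `i` to be even, so `δ = 0`.
-/

namespace OPRA

variable {m : ℕ}

lemma two_pi_div_four_mul_pos [NeZero m] : 0 < 2*π/(4*m) := by
  have : (0 : ℝ) < m := by exact_mod_cast Nat.pos_of_neZero m
  positivity

noncomputable def sectorCenter (m : ℕ) : ZMod (4*m) →+ Real.Angle :=
  ZMod.lift (4*m)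
    ⟨AddMonoidHom.mk' (fun n : ℤ => ((n * (2*π/(4*m)) : ℝ) : Real.Angle))
      (fun a b => by rw [Int.cast_add, add_mul, Real.Angle.coe_add]),
    by
      show ((((4*m : ℕ) : ℤ) * (2*π/(4*m)) : ℝ) : Real.Angle) = 0
      rcases eq_or_ne m 0 with rfl | hm
      · simp
      · push_cast
        rw [mul_div_cancel₀ _ (by positivity), Real.Angle.coe_two_pi]⟩

lemma sectorCenter_intCast (n : ℤ) :
    sectorCenter m n = ((n * (2*π/(4*m)) : ℝ) : Real.Angle) :=
  ZMod.lift_coe _ _ n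

lemma sectorCenter_apply [NeZero m] (a : ZMod (4*m)) :
    sectorCenter m a = ((2*π*(a.val : ℝ)/(4*m) : ℝ) : Real.Angle) := by
  calc sectorCenter m a = sectorCenter m ((a.val : ℤ) : ZMod (4*m)) := by simp
    _ = _ := by rw [sectorCenter_intCast, Int.cast_natCast]; congr 1; ring

def sectorOffsets (m : ℕ) (i : ZMod (4*m)) : Set ℝ :=
  if Odd i.val then Set.Ioo (-(2*π/(4*m))) (2*π/(4*m)) else {0}

lemma sector_eq_image [NeZero m] (i : ZMod (4*m)) :
    sector m i = (fun δ : ℝ => sectorCenter m i + δ) '' sectorOffsets m i := by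
  rw [sector, sectorOffsets, sectorCenter_apply]
  split_ifs
  · rw [show Set.Ioo (2*π*((i.val : ℝ)-1)/(4*m)) (2*π*((i.val : ℝ)+1)/(4*m)) =
        (2*π*(i.val : ℝ)/(4*m) + ·) '' Set.Ioo (-(2*π/(4*m))) (2*π/(4*m)) by
      rw [Set.image_const_add_Ioo]; congr 1 <;> ring, Set.image_image]
    simp only [Real.Angle.coe_add]
  · simp

lemma sectorOffsets_subset [NeZero m] (i : ZMod (4*m)) :
    sectorOffsets m i ⊆ Set.Ioo (-(2*π/(4*m))) (2*π/(4*m)) := by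
  rw [sectorOffsets]
  split_ifs
  · rfl
  · simpa using two_pi_div_four_mul_pos

lemma val_add_val_add_val_emod_two [NeZero m] {i j k : ZMod (4*m)} {e : ℤ}
    (h : i + j + k = e) : ((i.val : ℤ) + j.val + k.val) % 2 = e % 2 := by
  have hdvd : ((4*m : ℕ) : ℤ) ∣ e - ((i.val : ℤ) + j.val + k.val) := by
    rw [← ZMod.intCast_eq_intCast_iff_dvd_sub, ← h]
    simp
  have : (2 : ℤ) ∣ e - ((i.val : ℤ) + j.val + k.val) :=
    (show (2 : ℤ) ∣ ((4*m : ℕ) : ℤ) from ⟨2*m, by push_cast; ring⟩).trans hdvd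
  omega

lemma exists_intCast_of_turnRel [NeZero m] {i j k : ZMod (4*m)} (h : turnRel m i j k) :
    ∃ e : ℤ, |e| ≤ 1 ∧ i + j + k = e ∧ (e ≠ 0 → Odd i.val ∧ Odd j.val ∧ Odd k.val) := by
  rw [turnRel] at h
  split_ifs at h with hij
  · have odd_k (e : ℤ) (he : i + j + k = e) (hodd : Odd e) : Odd k.val := by
      have := val_add_val_add_val_emod_two he
      rw [Int.odd_iff] at hodd
      simp only [Nat.odd_iff] at hij ⊢
      omega
    rcases h with h | h | h
    · exact ⟨0, by simp, by simpa using h, fun h0 => (h0 rfl).elim⟩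
    · exact ⟨1, by simp, by simpa using h,
        fun _ => ⟨hij.1, hij.2, odd_k 1 (by simpa using h) odd_one⟩⟩
    · exact ⟨-1, by simp, by simpa using h,
        fun _ => ⟨hij.1, hij.2, odd_k (-1) (by simpa using h) (by decide)⟩⟩
  · exact ⟨0, by simp, by simpa using h, fun h0 => (h0 rfl).elim⟩

lemma exists_sectorOffsets_add_add_eq [NeZero m] {i j k : ZMod (4*m)} {e : ℤ} (he : |e| ≤ 1)
    (hsum : i + j + k = e) (hodd : e ≠ 0 → Odd i.val ∧ Odd j.val ∧ Odd k.val)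
    {δ : ℝ} (hδ : δ ∈ sectorOffsets m i) :
    ∃ δj ∈ sectorOffsets m j, ∃ δk ∈ sectorOffsets m k, δ + δj + δk = -(e * (2*π/(4*m))) := by
  have hw := two_pi_div_four_mul_pos (m := m)
  set w := 2*π/(4*m)
  have hδw := sectorOffsets_subset i hδ
  have hew : |e * w| ≤ w := by
    rw [abs_mul, abs_of_pos hw]
    exact mul_le_of_le_one_left hw.le (by exact_mod_cast he)
  by_cases hj : Odd j.val <;> by_cases hk : Odd k.val
  · refine ⟨(-δ - e*w)/2, ?_, (-δ - e*w)/2, ?_, by ring⟩ <;>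
    · simp only [sectorOffsets, hj, hk, if_true, Set.mem_Ioo]
      constructor <;> linarith [hδw.1, hδw.2, abs_le.mp hew]
  · obtain rfl : e = 0 := by by_contra h0; exact hk (hodd h0).2.2
    refine ⟨-δ, ?_, 0, by simp [sectorOffsets, hk], by simp⟩
    simp only [sectorOffsets, hj, if_true, Set.mem_Ioo]
    constructor <;> linarith [hδw.1, hδw.2]
  · obtain rfl : e = 0 := by by_contra h0; exact hj (hodd h0).2.1
    refine ⟨0, by simp [sectorOffsets, hj], -δ, ?_, by simp⟩
    simp only [sectorOffsets, hk, if_true, Set.mem_Ioo]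
    constructor <;> linarith [hδw.1, hδw.2]
  · obtain rfl : e = 0 := by by_contra h0; exact hj (hodd h0).2.1
    have hi : ¬Odd i.val := by
      have := val_add_val_add_val_emod_two hsum
      simp only [Nat.odd_iff] at hj hk ⊢
      omega
    have hδ0 : δ = 0 := by simpa [sectorOffsets, hi] using hδ
    exact ⟨0, by simp [sectorOffsets, hj], 0, by simp [sectorOffsets, hk], by simp [hδ0]⟩

theorem exists_add_add_eq_zero [NeZero m] {i j k : ZMod (4*m)} {e : ℤ} (he : |e| ≤ 1)
    (hsum : i + j + k = e) (hodd : e ≠ 0 → Odd i.val ∧ Odd j.val ∧ Odd k.val) :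
    ∀ α ∈ sector m i, ∃ β ∈ sector m j, ∃ γ ∈ sector m k, α + β + γ = 0 := by
  simp only [sector_eq_image, Set.forall_mem_image, Set.exists_mem_image]
  intro δ hδ
  obtain ⟨δj, hδj, δk, hδk, hsum'⟩ := exists_sectorOffsets_add_add_eq he hsum hodd hδ
  refine ⟨δj, hδj, δk, hδk, ?_⟩
  calc sectorCenter m i + δ + (sectorCenter m j + δj) + (sectorCenter m k + δk)
      = sectorCenter m (i + j + k) + ((δ + δj + δk : ℝ) : Real.Angle) := by
        simp only [map_add, Real.Angle.coe_add]; abel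
    _ = 0 := by rw [hsum, sectorCenter_intCast, hsum', Real.Angle.coe_neg, add_neg_cancel]

end OPRA

/-- if `turn_m(i,j,k)` holds then any one of the three angles may be
chosen arbitrarily in its sector and the other two completed to a full turn. -/
theorem stmt4 (m : ℕ) (hm : 1 ≤ m) (i j k : ZMod (4*m)) (h : turnRel m i j k) :
    (∀ α ∈ sector m i, ∃ β ∈ sector m j, ∃ γ ∈ sector m k, α + β + γ = 0) ∧
    (∀ β ∈ sector m j, ∃ α ∈ sector m i, ∃ γ ∈ sector m k, α + β + γ = 0) ∧
    (∀ γ ∈ sector m k, ∃ α ∈ sector m i, ∃ β ∈ sector m j, α + β + γ = 0) := by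
  have : NeZero m := ⟨by omega⟩
  obtain ⟨e, he, hsum, hodd⟩ := OPRA.exists_intCast_of_turnRel h
  refine ⟨OPRA.exists_add_add_eq_zero he hsum hodd, fun β hβ => ?_, fun γ hγ => ?_⟩
  · obtain ⟨α, hα, γ, hγ, hzero⟩ := OPRA.exists_add_add_eq_zero (i := j) (j := i) (k := k) he
      (by rw [← hsum]; ring) (fun h0 => by tauto) β hβ
    exact ⟨α, hα, γ, hγ, by rw [← hzero]; abel⟩
  · obtain ⟨α, hα, β, hβ, hzero⟩ := OPRA.exists_add_add_eq_zero (i := k) (j := i) (k := j) he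
      (by rw [← hsum]; ring) (fun h0 => by tauto) γ hγ
    exact ⟨α, hα, β, hβ, by rw [← hzero]; abel⟩
end

section
/- In the case that both i and j are odd elements of ℤ/4m, there exist α ∈ [i]_m, β ∈ [j]_m, γ ∈ [k]_m with α+β+γ ≡ 0 (mod 2π) if and only if k ∈ {-i-j-1, -i-j, -i-j+1} in ℤ/4m. -/
open Real Complex

/-! Measured in units of `2π / N` with `N = 4m`, the sector `[i]_m` becomes `arcSet i.val`: the
open interval of radius `1` around `i.val` for odd `i`, the point `i.val` for even `i`; and a sum
of angles vanishes iff the corresponding sum of reals is a multiple of `N`. For odd `i, j`, such a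
sum `a + b + c` lies within `2` of `i + j + k` when `k` is even, and within `3` when `k` is odd, in
which case `i + j + k` is odd while `N` is even; either way `i + j + k` is within `1` of a multiple
of `N`. Conversely, if `i + j + k ≡ d` with `|d| ≤ 1`, then `(i - d/4) + (j - d/4) + (k - d/2)` is
a multiple of `N`, and `d = 0` when `k` is even. -/

noncomputable def fracTurn (N : ℝ) : ℝ →+ Real.Angle :=
  Real.Angle.coeHom.comp (AddMonoidHom.mulLeft (2 * π / N))

theorem fracTurn_apply (N x : ℝ) : fracTurn N x = ((2 * π / N * x : ℝ) : Real.Angle) := rfl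

theorem ker_fracTurn {N : ℝ} (hN : N ≠ 0) :
    (fracTurn N).ker = AddSubgroup.zmultiples N := by
  ext x
  simp only [AddMonoidHom.mem_ker, fracTurn_apply, Real.Angle.coe_eq_zero_iff,
    AddSubgroup.mem_zmultiples_iff, zsmul_eq_mul]
  refine exists_congr fun n => ?_
  field_simp

def arcSet (v : ℕ) : Set ℝ :=
  if Odd v then Set.Ioo ((v : ℝ) - 1) (v + 1) else {(v : ℝ)}

theorem mem_arcSet_iff {v : ℕ} {x : ℝ} : x ∈ arcSet v ↔ |x - v| < 1 ∧ (Odd v ∨ x = v) := by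
  unfold arcSet
  split_ifs with hv
  · simp only [Set.mem_Ioo, abs_sub_lt_iff, hv, true_or, and_true]
    constructor <;> rintro ⟨h₁, h₂⟩ <;> constructor <;> linarith
  · simp only [Set.mem_singleton_iff, hv, false_or]
    constructor
    · rintro rfl; simp
    · exact And.right

theorem sector_eq_image (m : ℕ) (hm : 1 ≤ m) (i : ZMod (4*m)) :
    sector m i = fracTurn (4*m) '' arcSet i.val := by
  have hpos : 0 < 2 * π / (4 * m) := by positivity
  unfold sector arcSet
  split_ifs
  · rw [show ⇑(fracTurn (4*m)) = (↑) ∘ (2 * π / (4 * m) * ·) from rfl, Set.image_comp,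
      Set.image_mul_left_Ioo hpos]
    simp only [mul_div_right_comm]
  · rw [Set.image_singleton, fracTurn_apply, mul_div_right_comm]

theorem exists_mem_image_add_add_eq_zero {G H : Type*} [AddMonoid G] [AddMonoid H]
    (f : G →+ H) (A B C : Set G) :
    (∃ α ∈ f '' A, ∃ β ∈ f '' B, ∃ γ ∈ f '' C, α + β + γ = 0) ↔
      ∃ a ∈ A, ∃ b ∈ B, ∃ c ∈ C, f (a + b + c) = 0 := by
  simp only [Set.exists_mem_image, map_add]

theorem abs_sub_le_one_of_mem_arcSet {vi vj vk : ℕ} (hi : Odd vi) (hj : Odd vj) {N : ℤ}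
    (hN : Even N) {a b c : ℝ} (ha : a ∈ arcSet vi) (hb : b ∈ arcSet vj) (hc : c ∈ arcSet vk)
    {n : ℤ} (hn : a + b + c = n * N) : |(vi + vj + vk : ℤ) - n * N| ≤ 1 := by
  rw [mem_arcSet_iff, abs_sub_lt_iff] at ha hb hc
  obtain ⟨p, hp⟩ := hi
  obtain ⟨q, hq⟩ := hj
  obtain ⟨r, hr⟩ := hN
  have hnN : n * N = 2 * (n * r) := by rw [hr]; ring
  rw [abs_le]
  by_cases hk : Odd vk
  · obtain ⟨s, hs⟩ := hk
    have hlo : ((-3 : ℤ) : ℝ) < ((vi + vj + vk : ℤ) - n * N : ℤ) := by push_cast; linarith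
    have hhi : (((vi + vj + vk : ℤ) - n * N : ℤ) : ℝ) < (3 : ℤ) := by push_cast; linarith
    rw [Int.cast_lt] at hlo hhi
    omega
  · obtain rfl : c = vk := hc.2.resolve_left hk
    have hlo : ((-2 : ℤ) : ℝ) < ((vi + vj + vk : ℤ) - n * N : ℤ) := by push_cast; linarith
    have hhi : (((vi + vj + vk : ℤ) - n * N : ℤ) : ℝ) < (2 : ℤ) := by push_cast; linarith
    rw [Int.cast_lt] at hlo hhi
    omega

theorem exists_mem_arcSet_add_add_mem_zmultiples_iff {vi vj : ℕ} (hi : Odd vi) (hj : Odd vj)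
    (vk : ℕ) {N : ℤ} (hN : Even N) :
    (∃ a ∈ arcSet vi, ∃ b ∈ arcSet vj, ∃ c ∈ arcSet vk,
        a + b + c ∈ AddSubgroup.zmultiples (N : ℝ)) ↔
      ∃ d : ℤ, |d| ≤ 1 ∧ N ∣ vi + vj + vk - d := by
  simp only [AddSubgroup.mem_zmultiples_iff, zsmul_eq_mul]
  constructor
  · rintro ⟨a, ha, b, hb, c, hc, n, hn⟩
    exact ⟨_, abs_sub_le_one_of_mem_arcSet hi hj hN ha hb hc hn.symm, n, by ring⟩
  · rintro ⟨d, hd, n, hn⟩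
    have hd' : |(d : ℝ)| ≤ 1 := by exact_mod_cast hd
    rw [abs_le] at hd hd'
    have mem_of_odd {v : ℕ} (hv : Odd v) {x : ℝ} (hx : |x| < 1) : (v - x : ℝ) ∈ arcSet v := by
      rw [mem_arcSet_iff, sub_sub_cancel_left, abs_neg]
      exact ⟨hx, .inl hv⟩
    have hc : (vk - d / 2 : ℝ) ∈ arcSet vk := by
      by_cases hk : Odd vk
      · exact mem_of_odd hk (by rw [abs_lt]; constructor <;> linarith)
      · obtain ⟨p, hp⟩ := hi
        obtain ⟨q, hq⟩ := hj
        obtain ⟨r, hr⟩ := hN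
        obtain ⟨s, hs⟩ := Nat.not_odd_iff_even.mp hk
        have hnN : N * n = 2 * (r * n) := by rw [hr]; ring
        obtain rfl : d = 0 := by omega
        simp [mem_arcSet_iff]
    refine ⟨vi - d / 4, mem_of_odd hi ?_, vj - d / 4, mem_of_odd hj ?_, _, hc, n, ?_⟩
    · rw [abs_lt]; constructor <;> linarith
    · rw [abs_lt]; constructor <;> linarith
    · have hn' := congrArg (Int.cast : ℤ → ℝ) hn
      push_cast at hn'
      linarith

theorem exists_abs_le_one_dvd_iff {n : ℕ} [NeZero n] (i j k : ZMod n) :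
    (∃ d : ℤ, |d| ≤ 1 ∧ (n : ℤ) ∣ i.val + j.val + k.val - d) ↔
      (k = -i - j - 1 ∨ k = -i - j ∨ k = -i - j + 1) := by
  simp only [← ZMod.intCast_zmod_eq_zero_iff_dvd]
  push_cast [ZMod.natCast_val, ZMod.cast_id]
  constructor
  · rintro ⟨d, hd, h⟩
    rw [abs_le] at hd
    obtain rfl | rfl | rfl : d = -1 ∨ d = 0 ∨ d = 1 := by omega
    · left; linear_combination h
    · right; left; linear_combination h
    · right; right; linear_combination h
  · rintro (h | h | h)
    · exact ⟨-1, by norm_num, by rw [h]; push_cast; ring⟩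
    · exact ⟨0, by norm_num, by rw [h]; push_cast; ring⟩
    · exact ⟨1, by norm_num, by rw [h]; push_cast; ring⟩

/-- the odd-odd case of the `turn_m` characterization. -/
theorem stmt6 (m : ℕ) (hm : 1 ≤ m) (i j k : ZMod (4*m))
    (hi : Odd i.val) (hj : Odd j.val) :
    (∃ α ∈ sector m i, ∃ β ∈ sector m j, ∃ γ ∈ sector m k, α + β + γ = 0) ↔
      (k = -i - j - 1 ∨ k = -i - j ∨ k = -i - j + 1) := by
  have : NeZero (4*m) := ⟨by omega⟩
  have hN : (4 * m : ℝ) ≠ 0 := by positivity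
  simp only [sector_eq_image m hm, exists_mem_image_add_add_eq_zero, ← AddMonoidHom.mem_ker,
    ker_fracTurn hN]
  rw [← exists_abs_le_one_dvd_iff]
  exact_mod_cast exists_mem_arcSet_add_add_mem_zmultiples_iff hi hj k.val
    (N := ((4 * m : ℕ) : ℤ)) ⟨(2 * m : ℕ), by push_cast; ring⟩
end

section
/- The configuration A ∠i B (same position), B ∠_k^l C, A ∠_s^t C is realizable by o-points if and only if l = t and turn_m(i, k, -s) holds. -/
open Real Complex

/-!
Since `A` and `B` share their position, `φ_AC = φ_BC` and `φ_CA = φ_CB`. Sectors are pairwise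
disjoint, which forces `l = t`, and the three orientation differences `φ_B - φ_A ∈ [i]`,
`φ_BC - φ_B ∈ [k]` and `φ_A - φ_AC ∈ [-s]` sum to zero.

Measuring angles in units of `2π/4m`, the sector `[n]_m` is the image of the real interval
`(n - 1, n + 1)` for odd `n` and of `{n}` for even `n`. Each point of such an interval deviates
from its label by less than `1`, and not at all when the label is even; so three of them can sum
to zero exactly when their labels satisfy `turn_m`. Conversely, with `B` at `0` and `C` at `1`
any such triple of angles is realised.
-/

def sectorInterval (n : ℤ) : Set ℝ :=
  if Odd n then Set.Ioo ((n : ℝ) - 1) (n + 1) else {(n : ℝ)}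

lemma mem_sectorInterval_of_odd {n : ℤ} (hn : Odd n) {x : ℝ} :
    x ∈ sectorInterval n ↔ (n : ℝ) - 1 < x ∧ x < n + 1 := by
  simp [sectorInterval, hn]

lemma mem_sectorInterval_of_even {n : ℤ} (hn : Even n) {x : ℝ} :
    x ∈ sectorInterval n ↔ x = n := by
  simp [sectorInterval, Int.not_odd_iff_even.mpr hn]

lemma self_mem_sectorInterval (n : ℤ) : (n : ℝ) ∈ sectorInterval n := by
  rcases Int.even_or_odd n with hn | hn
  · exact (mem_sectorInterval_of_even hn).2 rfl
  · exact (mem_sectorInterval_of_odd hn).2 ⟨by linarith, by linarith⟩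

lemma neg_mem_sectorInterval {n : ℤ} {x : ℝ} (hx : x ∈ sectorInterval n) :
    -x ∈ sectorInterval (-n) := by
  rcases Int.even_or_odd n with hn | hn
  · rw [mem_sectorInterval_of_even hn] at hx
    rw [mem_sectorInterval_of_even hn.neg, hx]
    push_cast; rfl
  · rw [mem_sectorInterval_of_odd hn] at hx
    rw [mem_sectorInterval_of_odd hn.neg]
    push_cast
    constructor <;> linarith

lemma add_mem_sectorInterval {n c : ℤ} (hc : Even c) {x : ℝ} (hx : x ∈ sectorInterval n) :
    x + c ∈ sectorInterval (n + c) := by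
  rcases Int.even_or_odd n with hn | hn
  · rw [mem_sectorInterval_of_even hn] at hx
    rw [mem_sectorInterval_of_even (hn.add hc), hx]
    push_cast; rfl
  · rw [mem_sectorInterval_of_odd hn] at hx
    rw [mem_sectorInterval_of_odd (hn.add_even hc)]
    push_cast
    constructor <;> linarith

lemma eq_of_mem_sectorInterval {a b : ℤ} {x : ℝ} (ha : x ∈ sectorInterval a)
    (hb : x ∈ sectorInterval b) : a = b := by
  rcases Int.even_or_odd a with ha' | ha' <;> rcases Int.even_or_odd b with hb' | hb'
  · rw [mem_sectorInterval_of_even ha'] at ha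
    rw [mem_sectorInterval_of_even hb', ha] at hb
    exact_mod_cast hb
  · rw [mem_sectorInterval_of_even ha'] at ha
    rw [mem_sectorInterval_of_odd hb', ha] at hb
    have h1 : b - 1 < a := by exact_mod_cast hb.1
    have h2 : a < b + 1 := by exact_mod_cast hb.2
    omega
  · rw [mem_sectorInterval_of_odd ha'] at ha
    rw [mem_sectorInterval_of_even hb'] at hb
    rw [hb] at ha
    have h1 : a - 1 < b := by exact_mod_cast ha.1
    have h2 : b < a + 1 := by exact_mod_cast ha.2
    omega
  · rw [mem_sectorInterval_of_odd ha'] at ha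
    rw [mem_sectorInterval_of_odd hb'] at hb
    have h1 : a < b + 2 := by exact_mod_cast (by linarith : (a : ℝ) < b + 2)
    have h2 : b < a + 2 := by exact_mod_cast (by linarith : (b : ℝ) < a + 2)
    rcases ha' with ⟨k, rfl⟩
    rcases hb' with ⟨l, rfl⟩
    omega

def intTurn (a b c : ℤ) : Prop :=
  if Odd a ∧ Odd b then a + b + c = 0 ∨ a + b + c = 1 ∨ a + b + c = -1 else a + b + c = 0

lemma intTurn_of_mem_sectorInterval {a b c : ℤ} {x y z : ℝ} (hx : x ∈ sectorInterval a)
    (hy : y ∈ sectorInterval b) (hz : z ∈ sectorInterval c) (hsum : x + y + z = 0) :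
    intTurn a b c := by
  unfold intTurn
  split_ifs with hab
  · obtain ⟨ha, hb⟩ := hab
    rw [mem_sectorInterval_of_odd ha] at hx
    rw [mem_sectorInterval_of_odd hb] at hy
    rw [Int.odd_iff] at ha hb
    rcases Int.even_or_odd c with hc | hc
    · rw [mem_sectorInterval_of_even hc] at hz
      have hlo : -2 < a + b + c := by exact_mod_cast (by linarith : (-2 : ℝ) < a + b + c)
      have hhi : a + b + c < 2 := by exact_mod_cast (by linarith : (a + b + c : ℝ) < 2)
      rw [Int.even_iff] at hc
      omega
    · rw [mem_sectorInterval_of_odd hc] at hz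
      have hlo : -3 < a + b + c := by exact_mod_cast (by linarith : (-3 : ℝ) < a + b + c)
      have hhi : a + b + c < 3 := by exact_mod_cast (by linarith : (a + b + c : ℝ) < 3)
      rw [Int.odd_iff] at hc
      omega
  · -- an even label pins its point, so the other two points determine each other's label
    have hz' := neg_mem_sectorInterval hz
    rcases not_and_or.mp hab with ha | hb
    · rw [Int.not_odd_iff_even] at ha
      rw [mem_sectorInterval_of_even ha] at hx
      have hy' := add_mem_sectorInterval ha.neg hz'
      rw [show -z + ((-a : ℤ) : ℝ) = y by push_cast; linarith] at hy'
      have := eq_of_mem_sectorInterval hy hy'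
      omega
    · rw [Int.not_odd_iff_even] at hb
      rw [mem_sectorInterval_of_even hb] at hy
      have hx' := add_mem_sectorInterval hb.neg hz'
      rw [show -z + ((-b : ℤ) : ℝ) = x by push_cast; linarith] at hx'
      have := eq_of_mem_sectorInterval hx hx'
      omega

lemma exists_mem_sectorInterval_add_eq_zero_iff (a b c : ℤ) :
    (∃ x ∈ sectorInterval a, ∃ y ∈ sectorInterval b, ∃ z ∈ sectorInterval c, x + y + z = 0) ↔
      intTurn a b c := by
  refine ⟨fun ⟨x, hx, y, hy, z, hz, hsum⟩ => intTurn_of_mem_sectorInterval hx hy hz hsum, ?_⟩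
  unfold intTurn
  split_ifs with hab
  · intro hd
    have hd' : |((a + b + c : ℤ) : ℝ)| ≤ 1 := by
      rcases hd with hd | hd | hd <;> simp [hd]
    rw [abs_le] at hd'
    push_cast at hd'
    refine ⟨a - (a + b + c) / 2, ?_, b - (a + b + c) / 2, ?_, c, self_mem_sectorInterval c, by ring⟩
    · rw [mem_sectorInterval_of_odd hab.1]; constructor <;> linarith
    · rw [mem_sectorInterval_of_odd hab.2]; constructor <;> linarith
  · intro hd
    refine ⟨a, self_mem_sectorInterval a, b, self_mem_sectorInterval b, c,
      self_mem_sectorInterval c, by exact_mod_cast hd⟩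

noncomputable def opraAngle (m : ℕ) (x : ℝ) : Real.Angle :=
  ((2 * π / (4 * m) * x : ℝ) : Real.Angle)

section OpraAngle

variable {m : ℕ}

lemma opraAngle_add (x y : ℝ) : opraAngle m (x + y) = opraAngle m x + opraAngle m y := by
  rw [opraAngle, mul_add, Real.Angle.coe_add]; rfl

lemma opraAngle_neg (x : ℝ) : opraAngle m (-x) = -opraAngle m x := by
  rw [opraAngle, mul_neg, Real.Angle.coe_neg]; rfl

lemma opraAngle_zero : opraAngle m 0 = 0 := by
  simp [opraAngle]

variable [NeZero m]

lemma opraAngle_eq_opraAngle_iff {x y : ℝ} :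
    opraAngle m x = opraAngle m y ↔ ∃ k : ℤ, x = y + 4 * m * k := by
  have hm : (m : ℝ) ≠ 0 := NeZero.ne _
  rw [opraAngle, opraAngle, Real.Angle.angle_eq_iff_two_pi_dvd_sub]
  refine exists_congr fun k => ⟨fun h => ?_, fun h => ?_⟩
  · field_simp at h
    linarith
  · rw [h]
    field_simp
    ring

lemma sector_eq_image_val (i : ZMod (4 * m)) :
    sector m i = opraAngle m '' sectorInterval i.val := by
  have hu : 0 < 2 * π / (4 * m) := by have := NeZero.pos m; positivity
  have hcomp : opraAngle m = (fun r : ℝ => (r : Real.Angle)) ∘ (fun x => 2 * π / (4 * m) * x) :=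
    rfl
  by_cases hi : Odd i.val
  · rw [sector, if_pos hi, sectorInterval, if_pos (by exact_mod_cast hi), hcomp, Set.image_comp,
      Set.image_mul_left_Ioo hu]
    congr 2 <;> push_cast <;> ring
  · rw [sector, if_neg hi, sectorInterval, if_neg (by exact_mod_cast hi), Set.image_singleton]
    congr 2
    push_cast
    ring

lemma image_sectorInterval_subset (n k : ℤ) :
    opraAngle m '' sectorInterval n ⊆ opraAngle m '' sectorInterval (n + 4 * m * k) := by
  rintro _ ⟨x, hx, rfl⟩
  refine ⟨x + ((4 * m * k : ℤ) : ℝ), add_mem_sectorInterval ⟨2 * m * k, by ring⟩ hx, ?_⟩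
  exact opraAngle_eq_opraAngle_iff.mpr ⟨k, by push_cast; ring⟩

lemma sector_eq_image_s15 {i : ZMod (4 * m)} {n : ℤ} (hn : (n : ZMod (4 * m)) = i) :
    sector m i = opraAngle m '' sectorInterval n := by
  obtain ⟨k, hk⟩ : ((4 * m : ℕ) : ℤ) ∣ n - i.val := by
    rw [← ZMod.intCast_eq_intCast_iff_dvd_sub]
    simp [hn]
  have hn' : n = i.val + 4 * m * k := by push_cast at hk; linarith
  rw [sector_eq_image_val, hn']
  refine (image_sectorInterval_subset _ k).antisymm ?_
  simpa using image_sectorInterval_subset (m := m) (i.val + 4 * m * k) (-k)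

end OpraAngle

lemma four_mul_natCast_self (m : ℕ) : (4 * m : ZMod (4 * m)) = 0 := by
  exact_mod_cast ZMod.natCast_self (4 * m)

section Sector

variable {m : ℕ} [NeZero m]

lemma sector_nonempty (i : ZMod (4 * m)) : (sector m i).Nonempty := by
  rw [sector_eq_image_val]
  exact ⟨_, Set.mem_image_of_mem _ (self_mem_sectorInterval _)⟩

lemma eq_of_mem_sector {i j : ZMod (4 * m)} {θ : Real.Angle} (hi : θ ∈ sector m i)
    (hj : θ ∈ sector m j) : i = j := by
  rw [sector_eq_image_val] at hi hj
  obtain ⟨x, hx, rfl⟩ := hi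
  obtain ⟨y, hy, hxy⟩ := hj
  obtain ⟨k, rfl⟩ := opraAngle_eq_opraAngle_iff.mp hxy
  have hx' := add_mem_sectorInterval (c := 4 * m * k) ⟨2 * m * k, by ring⟩ hx
  push_cast at hx'
  have := congrArg (Int.cast : ℤ → ZMod (4 * m)) (eq_of_mem_sectorInterval hx' hy)
  simpa [four_mul_natCast_self] using this

lemma neg_mem_sector {i : ZMod (4 * m)} {θ : Real.Angle} (h : θ ∈ sector m i) :
    -θ ∈ sector m (-i) := by
  rw [sector_eq_image_val] at h
  rw [sector_eq_image_s15 (n := -(i.val : ℤ)) (by simp)]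
  obtain ⟨x, hx, rfl⟩ := h
  exact ⟨-x, neg_mem_sectorInterval hx, opraAngle_neg x⟩

lemma exists_mem_sector_add_eq_zero_iff_exists_intCast (i j k : ZMod (4 * m)) :
    (∃ α ∈ sector m i, ∃ β ∈ sector m j, ∃ γ ∈ sector m k, α + β + γ = 0) ↔
      ∃ c : ℤ, (c : ZMod (4 * m)) = k ∧ ∃ x ∈ sectorInterval i.val, ∃ y ∈ sectorInterval j.val,
        ∃ z ∈ sectorInterval c, x + y + z = 0 := by
  simp only [sector_eq_image_val i, sector_eq_image_val j, Set.exists_mem_image]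
  constructor
  · rintro ⟨x, hx, y, hy, _, hz, hsum⟩
    rw [sector_eq_image_val] at hz
    obtain ⟨z, hz, rfl⟩ := hz
    rw [← opraAngle_add, ← opraAngle_add, ← opraAngle_zero (m := m),
      opraAngle_eq_opraAngle_iff] at hsum
    obtain ⟨N, hN⟩ := hsum
    refine ⟨k.val + 4 * m * (-N), by simp [four_mul_natCast_self], x, hx, y, hy,
      z + ((4 * m * (-N) : ℤ) : ℝ), add_mem_sectorInterval ⟨2 * m * (-N), by ring⟩ hz, ?_⟩
    push_cast
    linarith
  · rintro ⟨c, rfl, x, hx, y, hy, z, hz, hsum⟩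
    refine ⟨x, hx, y, hy, opraAngle m z, ?_, ?_⟩
    · rw [sector_eq_image_s15 rfl]
      exact Set.mem_image_of_mem _ hz
    · rw [← opraAngle_add, ← opraAngle_add, hsum, opraAngle_zero]

lemma turnRel_iff_exists_intCast (i j k : ZMod (4 * m)) :
    turnRel m i j k ↔ ∃ c : ℤ, (c : ZMod (4 * m)) = k ∧ intTurn i.val j.val c := by
  have hlift : ∀ d : ℤ,
      i + j + k = d ↔ ∃ c : ℤ, (c : ZMod (4 * m)) = k ∧ i.val + j.val + c = d := by
    intro d
    constructor
    · intro h
      refine ⟨d - i.val - j.val, ?_, by ring⟩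
      simp only [ZMod.natCast_val, Int.cast_sub, ZMod.intCast_cast, ZMod.cast_id', id_eq]
      linear_combination -h
    · rintro ⟨c, rfl, hc⟩
      rw [← hc]
      simp
  unfold turnRel intTurn
  simp only [Int.odd_coe_nat]
  split_ifs
  · have h0 := hlift 0
    have h1 := hlift 1
    have hm1 := hlift (-1)
    push_cast at h0 h1 hm1
    rw [h0, h1, hm1]
    simp only [← exists_or, ← and_or_left]
  · simpa using hlift 0

lemma exists_mem_sector_add_eq_zero_iff_turnRel (i j k : ZMod (4 * m)) :
    (∃ α ∈ sector m i, ∃ β ∈ sector m j, ∃ γ ∈ sector m k, α + β + γ = 0) ↔ turnRel m i j k := by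
  rw [exists_mem_sector_add_eq_zero_iff_exists_intCast, turnRel_iff_exists_intCast]
  simp only [exists_mem_sectorInterval_add_eq_zero_iff]

end Sector

lemma oprarel_zero_one {m : ℕ} (k l : ZMod (4 * m)) (a b : Real.Angle) :
    oprarel m k l (0, a) (1, b) ↔ -a ∈ sector m k ∧ (π : Real.Angle) - b ∈ sector m l := by
  have h01 : phiAngle 0 1 = 0 := by simp [phiAngle]
  have h10 : phiAngle 1 0 = π := by rw [phiAngle, zero_sub, Complex.arg_neg_one]
  simp [oprarel, h01, h10]

/-- composition of a same-position with a distinct-position relation. -/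
theorem stmt15 (m : ℕ) (hm : 1 ≤ m) (i k l s t : ZMod (4*m)) :
    (∃ A B C : OPoint, oprasame m i A B ∧ oprarel m k l B C ∧ oprarel m s t A C) ↔
      (l = t ∧ turnRel m i k (-s)) := by
  have : NeZero m := ⟨by omega⟩
  constructor
  · rintro ⟨A, B, C, ⟨hAB, hi⟩, ⟨-, hk, hl⟩, ⟨-, hs, ht⟩⟩
    rw [hAB] at hs ht
    refine ⟨eq_of_mem_sector hl ht, (exists_mem_sector_add_eq_zero_iff_turnRel i k (-s)).mp ?_⟩
    exact ⟨_, hi, _, hk, _, neg_mem_sector hs, by abel⟩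
  · rintro ⟨rfl, hturn⟩
    obtain ⟨α, hα, β, hβ, γ, hγ, hsum⟩ :=
      (exists_mem_sector_add_eq_zero_iff_turnRel i k (-s)).mpr hturn
    obtain ⟨θ, hθ⟩ := sector_nonempty l
    have hs : α + β ∈ sector m s := by
      simpa [eq_neg_of_add_eq_zero_left hsum] using neg_mem_sector hγ
    refine ⟨(0, -(α + β)), (0, -β), (1, π - θ), ⟨rfl, ?_⟩, (oprarel_zero_one _ _ _ _).2 ⟨?_, ?_⟩,
      (oprarel_zero_one _ _ _ _).2 ⟨?_, ?_⟩⟩ <;> simpa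
end

section
/- Composition in OPRA_m is weak, not strong: for every m ≥ 1 there exist o-points A, C with A ∠_{4m-1}^{4m-1} C such that no o-point B exists with A ∠_0^0 B and B ∠_1^{2m} C, although the triple (∠_0^0, ∠_1^{2m}, ∠_{4m-1}^{4m-1}) is realizable by some other choice of A, B, C. -/
open Real Complex

/-
If `A ∠_0^0 B`, then `B` faces `A`, so `B.2 = A.2 + π`; if `B ∠_i^{2m} C`, then `C` faces
away from `B`, so `φ_BC = C.2`. Hence `φ_BC - B.2 = C.2 - A.2 - π` does not depend on where `B`
is, and `A ∠_0^0 B ∠_1^{2m} C` forces `C.2 - A.2 - π ∈ [1]_m`. With `a = π/(4m)`, the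
o-points `A = (0, 0)` and `C = (e^{-ia}, π - a/2)` satisfy `A ∠_{4m-1}^{4m-1} C` while
`C.2 - A.2 - π = -a/2 ∉ [1]_m`. The triple is realized by `A = (0, 0)`, `B = (1, π)` and `C` the
apex below `[0, 1]` of the isosceles triangle with base angles `a`, oriented along `φ_BC = π + a`.
-/

lemma phiAngle_swap {X Y : ℂ} (h : X ≠ Y) : phiAngle Y X = phiAngle X Y + π := by
  rw [phiAngle, phiAngle, ← neg_sub, Complex.arg_neg_coe_angle (sub_ne_zero.2 h.symm)]

lemma phiAngle_of_sub_eq {X Y : ℂ} {r θ : ℝ} (hr : 0 < r) (h : Y - X = r * exp (θ * I)) :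
    phiAngle X Y = θ := by
  rw [phiAngle, h, Complex.arg_real_mul _ hr, Complex.arg_exp, Real.Angle.coe_toIocMod]
  simp

lemma sector_zero (m : ℕ) : sector m 0 = {0} := by
  simp [sector]

lemma sector_two_mul {m : ℕ} (hm : 0 < m) :
    sector m ((2 * m : ℕ) : ZMod (4 * m)) = {(π : Real.Angle)} := by
  have hval : ((2 * m : ℕ) : ZMod (4 * m)).val = 2 * m := ZMod.val_natCast_of_lt (by omega)
  rw [sector, hval, if_neg (by simp [Nat.odd_iff, Nat.mul_mod_right])]
  congr 2
  field_simp
  push_cast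
  ring

lemma sector_one {m : ℕ} (hm : 0 < m) :
    sector m 1 = ((↑) : ℝ → Real.Angle) '' Set.Ioo 0 (π / m) := by
  have hval : (1 : ZMod (4 * m)).val = 1 := by
    rw [ZMod.val_one_eq_one_mod, Nat.mod_eq_of_lt (by omega)]
  rw [sector, hval, if_pos odd_one]
  congr 2
  · simp
  · field_simp
    push_cast
    ring

lemma coe_mem_sector_four_mul_sub_one {m : ℕ} (hm : 0 < m) {x : ℝ}
    (hx : x ∈ Set.Ioo (-(π / m)) 0) :
    (x : Real.Angle) ∈ sector m ((4 * m - 1 : ℕ) : ZMod (4 * m)) := by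
  have hval : ((4 * m - 1 : ℕ) : ZMod (4 * m)).val = 4 * m - 1 :=
    ZMod.val_natCast_of_lt (by omega)
  rw [sector, hval, if_pos ⟨2 * m - 1, by omega⟩]
  refine ⟨x + 2 * π, ?_, by simp⟩
  have hm' : (0 : ℝ) < m := by exact_mod_cast hm
  obtain ⟨h1, h2⟩ := hx
  push_cast [Nat.cast_sub (by omega : 1 ≤ 4 * m)]
  constructor
  · rw [div_lt_iff₀ (by positivity)]
    rw [neg_lt, lt_div_iff₀ hm'] at h1
    nlinarith
  · rw [lt_div_iff₀ (by positivity)]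
    nlinarith [Real.pi_pos]

lemma coe_neg_not_mem_sector_one {m : ℕ} (hm : 0 < m) {x : ℝ} (hx₀ : 0 < x) (hxπ : x < π) :
    ((-x : ℝ) : Real.Angle) ∉ sector m 1 := by
  rw [sector_one hm]
  rintro ⟨y, ⟨hy₀, hy⟩, hyx⟩
  have hπm : π / m ≤ π := div_le_self Real.pi_pos.le (by exact_mod_cast hm)
  have := congrArg Real.Angle.toReal hyx
  rw [Real.Angle.toReal_coe_eq_self_iff.2 ⟨by linarith, by linarith⟩,
    Real.Angle.toReal_coe_eq_self_iff.2 ⟨by linarith, by linarith⟩] at this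
  linarith

lemma orientation_eq_of_oprarel_zero_zero {m : ℕ} {A B : OPoint} (h : oprarel m 0 0 A B) :
    B.2 = A.2 + π := by
  obtain ⟨hne, hA, hB⟩ := h
  rw [sector_zero, Set.mem_singleton_iff, sub_eq_zero] at hA hB
  rw [← hB, phiAngle_swap hne, hA]

lemma phiAngle_eq_orientation_of_oprarel_two_mul {m : ℕ} (hm : 0 < m) {i : ZMod (4 * m)}
    {B C : OPoint} (h : oprarel m i ((2 * m : ℕ) : ZMod (4 * m)) B C) :
    phiAngle B.1 C.1 = C.2 := by
  obtain ⟨hne, -, hC⟩ := h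
  rw [sector_two_mul hm, Set.mem_singleton_iff, sub_eq_iff_eq_add] at hC
  rw [phiAngle_swap hne.symm, hC, add_comm, ← add_assoc, Real.Angle.coe_pi_add_coe_pi, zero_add]

lemma mem_sector_of_oprarel_zero_zero_of_oprarel_two_mul {m : ℕ} (hm : 0 < m) {i : ZMod (4 * m)}
    {A B C : OPoint} (hAB : oprarel m 0 0 A B)
    (hBC : oprarel m i ((2 * m : ℕ) : ZMod (4 * m)) B C) :
    C.2 - (A.2 + π) ∈ sector m i := by
  have h := hBC.2.1
  rwa [phiAngle_eq_orientation_of_oprarel_two_mul hm hBC,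
    orientation_eq_of_oprarel_zero_zero hAB] at h

lemma exists_oprarel_not_comp {m : ℕ} (hm : 0 < m) :
    ∃ A C : OPoint,
      oprarel m ((4 * m - 1 : ℕ) : ZMod (4 * m)) ((4 * m - 1 : ℕ) : ZMod (4 * m)) A C ∧
      ¬ ∃ B : OPoint, oprarel m 0 0 A B ∧ oprarel m 1 ((2 * m : ℕ) : ZMod (4 * m)) B C := by
  set a : ℝ := π / (4 * m)
  have ha : 0 < a := by positivity
  have hm' : (0 : ℝ) < m := by exact_mod_cast hm
  have ha' : a < π / m := div_lt_div_of_pos_left Real.pi_pos hm' (by linarith)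
  have haπ : a < π := div_lt_self Real.pi_pos (by norm_cast; omega)
  have hAC : phiAngle 0 (exp (↑(-a) * I)) = ↑(-a) :=
    phiAngle_of_sub_eq one_pos (by simp)
  have hne : (0 : ℂ) ≠ exp (↑(-a) * I) := (Complex.exp_ne_zero _).symm
  refine ⟨(0, 0), (exp (↑(-a) * I), ↑(π - a / 2)), ⟨hne, ?_, ?_⟩, ?_⟩
  · rw [hAC, sub_zero]
    exact coe_mem_sector_four_mul_sub_one hm ⟨by linarith, by linarith⟩
  · rw [phiAngle_swap hne, hAC, ← Real.Angle.coe_add, ← Real.Angle.coe_sub,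
      show -a + π - (π - a / 2) = -(a / 2) by ring]
    exact coe_mem_sector_four_mul_sub_one hm ⟨by linarith, by linarith⟩
  · rintro ⟨B, hAB, hBC⟩
    have h := mem_sector_of_oprarel_zero_zero_of_oprarel_two_mul hm hAB hBC
    rw [zero_add, ← Real.Angle.coe_sub, show π - a / 2 - π = -(a / 2) by ring] at h
    exact coe_neg_not_mem_sector_one hm (by linarith) (by linarith) h

lemma exists_oprarel_comp {m : ℕ} (hm : 0 < m) :
    ∃ A B C : OPoint,
      oprarel m 0 0 A B ∧ oprarel m 1 ((2 * m : ℕ) : ZMod (4 * m)) B C ∧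
      oprarel m ((4 * m - 1 : ℕ) : ZMod (4 * m)) ((4 * m - 1 : ℕ) : ZMod (4 * m)) A C := by
  set a : ℝ := π / (4 * m)
  have hm' : (0 : ℝ) < m := by exact_mod_cast hm
  have ha : 0 < a := by positivity
  have ha' : 2 * a < π / m := by
    rw [show 2 * a = π / (2 * m) by ring]
    exact div_lt_div_of_pos_left Real.pi_pos (by positivity) (by linarith)
  have haπ : a < π / 2 := div_lt_div_of_pos_left Real.pi_pos two_pos (by norm_cast; omega)
  have hcos : 0 < Real.cos a := Real.cos_pos_of_mem_Ioo ⟨by linarith, haπ⟩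
  set r : ℝ := (2 * Real.cos a)⁻¹
  have hr : 0 < r := by positivity
  set z : ℂ := r * exp (↑(-a) * I)
  have hz : z - 1 = r * exp (↑(π + a) * I) := by
    have hrcos : (r : ℂ) * (exp (a * I) + exp (-a * I)) = 1 := by
      rw [← Complex.two_cos, ← Complex.ofReal_cos, ← Complex.ofReal_ofNat,
        ← Complex.ofReal_mul, ← Complex.ofReal_mul, inv_mul_cancel₀ (by positivity), Complex.ofReal_one]
    simp only [z, Complex.ofReal_add, add_mul, Complex.exp_add, Complex.exp_pi_mul_I]
    push_cast
    linear_combination hrcos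
  have hAB : phiAngle 0 1 = ↑(0 : ℝ) := phiAngle_of_sub_eq one_pos (by simp)
  have hAC : phiAngle 0 z = ↑(-a) := phiAngle_of_sub_eq hr (sub_zero z)
  have hBC : phiAngle 1 z = ↑(π + a) := phiAngle_of_sub_eq hr hz
  have hpolar (θ : ℝ) : (r : ℂ) * exp (θ * I) ≠ 0 :=
    mul_ne_zero (by exact_mod_cast hr.ne') (Complex.exp_ne_zero _)
  have hz0 : (0 : ℂ) ≠ z := (hpolar _).symm
  have hz1 : (1 : ℂ) ≠ z := (sub_ne_zero.1 (hz ▸ hpolar _)).symm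
  refine ⟨(0, 0), (1, π), (z, ↑(π + a)),
    ⟨zero_ne_one, ?_, ?_⟩, ⟨hz1, ?_, ?_⟩, ⟨hz0, ?_, ?_⟩⟩
  · rw [sector_zero, hAB]
    simp
  · rw [sector_zero, phiAngle_swap zero_ne_one, hAB]
    simp
  · rw [hBC, ← Real.Angle.coe_sub, add_sub_cancel_left, sector_one hm]
    exact ⟨a, ⟨ha, by linarith⟩, rfl⟩
  · rw [sector_two_mul hm, phiAngle_swap hz1, hBC, add_sub_cancel_left]
    rfl
  · rw [hAC, sub_zero]
    exact coe_mem_sector_four_mul_sub_one hm ⟨by linarith, by linarith⟩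
  · rw [phiAngle_swap hz0, hAC, ← Real.Angle.coe_add, ← Real.Angle.coe_sub,
      show -a + π - (π + a) = -(2 * a) by ring]
    exact coe_mem_sector_four_mul_sub_one hm ⟨by linarith, by linarith⟩

/-- composition in OPRA_m is weak, not strong. -/
theorem stmt18 (m : ℕ) (hm : 1 ≤ m) :
    (∃ A C : OPoint,
      oprarel m (((4*m - 1 : ℕ) : ZMod (4*m))) (((4*m - 1 : ℕ) : ZMod (4*m))) A C ∧
      ¬ ∃ B : OPoint, oprarel m 0 0 A B ∧ oprarel m 1 (((2*m : ℕ) : ZMod (4*m))) B C) ∧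
    (∃ A B C : OPoint,
      oprarel m 0 0 A B ∧ oprarel m 1 (((2*m : ℕ) : ZMod (4*m))) B C ∧
      oprarel m (((4*m - 1 : ℕ) : ZMod (4*m))) (((4*m - 1 : ℕ) : ZMod (4*m))) A C) :=
  ⟨exists_oprarel_not_comp hm, exists_oprarel_comp hm⟩
end
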